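/- arXiv:1712.00827 — 4 statements merged into one kernel-verified Lean document; each statement's English description precedes it below -/
import Mathlib

section
/- For every operator σ_{AB} in PPT'(A:B) (i.e., σ ≥ 0 and ||T_B(σ)||_1 ≤ 1) and the maximally entangled state Φ_{AB} = (1/M)|Υ⟩⟨Υ|_{AB} of Schmidt rank M, one has Tr(Φ_{AB} σ_{AB}) ≤ 1/M. -/
open Matrix
open scoped ComplexOrder

variable {ι : Type} [Fintype ι] [DecidableEq ι] [Nonempty ι]

/-- Partial transpose on the second (B) tensor factor. -/
def partialTransposeB (Q : Matrix (ι × ι) (ι × ι) ℂ) : Matrix (ι × ι) (ι × ι) ℂ :=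
  Matrix.of fun p q => Q (p.1, q.2) (q.1, p.2)

/-- The trace norm `‖A‖₁ = Tr √(A†A)`. -/
noncomputable def traceNorm (A : Matrix (ι × ι) (ι × ι) ℂ) : ℝ :=
  (((Matrix.isHermitian_conjTranspose_mul_self A).eigenvectorUnitary : Matrix (ι × ι) (ι × ι) ℂ) *
    diagonal (((↑) : ℝ → ℂ) ∘ (√·) ∘ (Matrix.isHermitian_conjTranspose_mul_self A).eigenvalues) *
    (star (Matrix.isHermitian_conjTranspose_mul_self A).eigenvectorUnitary :
      Matrix (ι × ι) (ι × ι) ℂ)).trace.re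

/-- The maximally entangled state `Φ_{AB} = (1/M)|Υ⟩⟨Υ|` of Schmidt rank
`M = dim H_A = dim H_B`. -/
noncomputable def maxEntState : Matrix (ι × ι) (ι × ι) ℂ :=
  ((Fintype.card ι : ℂ))⁻¹ •
    Matrix.of fun p q => if p.1 = p.2 ∧ q.1 = q.2 then (1 : ℂ) else 0

/-!
Partial transposition preserves the pairing `(P, Q) ↦ Tr(P Q)`, and `T_B(Φ) = F / M` with `F` the
swap operator. Hence `Tr(Φ σ) = Tr(F T_B(σ)) / M`, and Hölder's inequality with the permutation
matrix `F`, whose operator norm is at most `1`, bounds this by `‖T_B(σ)‖₁ / M ≤ 1 / M`.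
-/

open scoped Matrix.Norms.L2Operator InnerProductSpace

namespace Matrix

variable {𝕜 n : Type*} [RCLike 𝕜] [Fintype n] [DecidableEq n]

theorem trace_eq_sum_inner_toEuclideanLin (A : Matrix n n 𝕜)
    (b : OrthonormalBasis n 𝕜 (EuclideanSpace 𝕜 n)) :
    A.trace = ∑ k, ⟪b k, toEuclideanLin A (b k)⟫_𝕜 := by
  rw [← LinearMap.trace_eq_sum_inner,
    LinearMap.trace_eq_matrix_trace 𝕜 (EuclideanSpace.basisFun n 𝕜).toBasis,
    toEuclideanLin_eq_toLin_orthonormal, LinearMap.toMatrix_toLin]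

theorem norm_toEuclideanLin_eigenvectorBasis_conjTranspose_mul_self (Y : Matrix n n 𝕜) (k : n) :
    ‖toEuclideanLin Y ((isHermitian_conjTranspose_mul_self Y).eigenvectorBasis k)‖ =
      √((isHermitian_conjTranspose_mul_self Y).eigenvalues k) := by
  rw [eq_comm, Real.sqrt_eq_iff_eq_sq (eigenvalues_conjTranspose_mul_self_nonneg Y k)
    (norm_nonneg _), IsHermitian.eigenvalues_eq, ← mulVec_mulVec, dotProduct_mulVec,
    vecMul_conjTranspose, star_star, @norm_sq_eq_re_inner 𝕜,
    EuclideanSpace.inner_eq_star_dotProduct, dotProduct_comm]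
  rfl

/-- Hölder's inequality `Re Tr(X Y) ≤ ‖X‖_∞ ‖Y‖₁`, written with `‖Y‖₁ = ∑ₖ √λₖ(Yᴴ Y)`. -/
theorem re_trace_mul_le_l2_opNorm_mul_sum_sqrt_eigenvalues (X Y : Matrix n n 𝕜) :
    RCLike.re (X * Y).trace ≤
      ‖X‖ * ∑ k, √((isHermitian_conjTranspose_mul_self Y).eigenvalues k) := by
  set b := (isHermitian_conjTranspose_mul_self Y).eigenvectorBasis
  rw [trace_eq_sum_inner_toEuclideanLin _ b, map_sum, Finset.mul_sum]
  gcongr with k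
  calc RCLike.re ⟪b k, toEuclideanLin (X * Y) (b k)⟫_𝕜
      ≤ ‖b k‖ * ‖toEuclideanLin X (toEuclideanLin Y (b k))‖ := by
        rw [toLpLin_mul_same]
        exact (RCLike.re_le_norm _).trans (norm_inner_le_norm _ _)
    _ ≤ ‖X‖ * ‖toEuclideanLin Y (b k)‖ := by
        rw [b.orthonormal.1 k, one_mul]
        exact (toEuclideanCLM (n := n) (𝕜 := 𝕜) X).le_opNorm _
    _ = ‖X‖ * √((isHermitian_conjTranspose_mul_self Y).eigenvalues k) := by
        rw [norm_toEuclideanLin_eigenvectorBasis_conjTranspose_mul_self]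

end Matrix

theorem traceNorm_eq_sum_sqrt_eigenvalues {κ : Type} [Fintype κ] [DecidableEq κ]
    (A : Matrix (κ × κ) (κ × κ) ℂ) :
    traceNorm A = ∑ k, √((isHermitian_conjTranspose_mul_self A).eigenvalues k) := by
  rw [traceNorm, trace_mul_cycle, (isHermitian_conjTranspose_mul_self A).eigenvectorUnitary.2.1,
    one_mul, trace_diagonal, Complex.re_sum]
  simp only [Function.comp_apply, Complex.ofReal_re]

theorem traceNorm_nonneg {κ : Type} [Fintype κ] [DecidableEq κ] (A : Matrix (κ × κ) (κ × κ) ℂ) :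
    0 ≤ traceNorm A := by
  rw [traceNorm_eq_sum_sqrt_eigenvalues]
  positivity

theorem re_trace_mul_le_l2_opNorm_mul_traceNorm {κ : Type} [Fintype κ] [DecidableEq κ]
    (X A : Matrix (κ × κ) (κ × κ) ℂ) :
    (X * A).trace.re ≤ ‖X‖ * traceNorm A := by
  rw [traceNorm_eq_sum_sqrt_eigenvalues]
  exact X.re_trace_mul_le_l2_opNorm_mul_sum_sqrt_eigenvalues A

theorem trace_partialTransposeB_mul {κ : Type} [Fintype κ] (P Q : Matrix (κ × κ) (κ × κ) ℂ) :
    (partialTransposeB P * partialTransposeB Q).trace = (P * Q).trace := by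
  let τ : (κ × κ) × (κ × κ) → (κ × κ) × (κ × κ) := fun x => ((x.1.1, x.2.2), (x.2.1, x.1.2))
  have hτ : Function.Involutive τ := fun _ => rfl
  simp only [trace, diag, mul_apply, partialTransposeB, of_apply, ← Fintype.sum_prod_type']
  exact Fintype.sum_equiv hτ.toPerm _ _ fun _ => rfl

theorem partialTransposeB_maxEntState {κ : Type} [Fintype κ] [DecidableEq κ] :
    partialTransposeB (maxEntState : Matrix (κ × κ) (κ × κ) ℂ) =
      (Fintype.card κ : ℂ)⁻¹ • Equiv.Perm.permMatrix ℂ (Equiv.prodComm κ κ) := by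
  ext p q
  simp [partialTransposeB, maxEntState, PEquiv.toMatrix_apply, Prod.ext_iff, eq_comm, and_comm]

theorem trace_maxEntState_le_of_mem_PPT'_general (σ : Matrix (ι × ι) (ι × ι) ℂ)
    (hPPT' : traceNorm (partialTransposeB σ) ≤ 1) :
    ((maxEntState * σ).trace).re ≤ 1 / (Fintype.card ι : ℝ) := by
  let F := Equiv.Perm.permMatrix ℂ (Equiv.prodComm ι ι)
  calc ((maxEntState * σ).trace).re
      = ((partialTransposeB maxEntState * partialTransposeB σ).trace).re := by
        rw [trace_partialTransposeB_mul]
    _ = (Fintype.card ι : ℝ)⁻¹ * ((F * partialTransposeB σ).trace).re := by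
        rw [partialTransposeB_maxEntState, smul_mul, trace_smul, smul_eq_mul,
          ← Complex.ofReal_natCast, ← Complex.ofReal_inv, Complex.re_ofReal_mul]
    _ ≤ (Fintype.card ι : ℝ)⁻¹ * 1 := by
        gcongr
        exact (re_trace_mul_le_l2_opNorm_mul_traceNorm F _).trans
          (mul_le_one₀ (permMatrix_l2_opNorm_le _) (traceNorm_nonneg _) hPPT')
    _ = 1 / (Fintype.card ι : ℝ) := by rw [mul_one, one_div]

/-- For every `σ ∈ PPT'(A:B)` (i.e. `σ ≥ 0` and `‖T_B(σ)‖₁ ≤ 1`), one has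
`Tr(Φ_{AB} σ_{AB}) ≤ 1/M`. -/
theorem trace_maxEntState_le_of_mem_PPT' (σ : Matrix (ι × ι) (ι × ι) ℂ)
    (hσ : σ.PosSemidef) (hPPT' : traceNorm (partialTransposeB σ) ≤ 1) :
    ((maxEntState * σ).trace).re ≤ 1 / (Fintype.card ι : ℝ) :=
  trace_maxEntState_le_of_mem_PPT'_general σ hPPT'
end

section
/- The max-relative entropy D_max(ρ||σ) := log₂ inf{λ ≥ 0 : ρ ≤ λ σ} (with value +∞ if no such λ exists) is monotone under positive trace-preserving linear maps: for density operators ρ, σ and any positive trace-preserving map N, D_max(N(ρ)||N(σ)) ≤ D_max(ρ||σ). -/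
open Matrix
open scoped ComplexOrder Classical

/-- The max-relative entropy `D_max(ρ‖σ) = log₂ inf{λ ≥ 0 : ρ ≤ λσ}`, with value
`+∞` if no such `λ` exists.  Here `ρ ≤ λσ` means `λ•σ − ρ` is positive
semi-definite. -/
noncomputable def Dmax {n : Type} [Fintype n] [DecidableEq n]
    (ρ σ : Matrix n n ℂ) : EReal :=
  if _h : {l : ℝ | 0 ≤ l ∧ ((l : ℝ) • σ - ρ).PosSemidef}.Nonempty then
    ((Real.logb 2 (sInf {l : ℝ | 0 ≤ l ∧ ((l : ℝ) • σ - ρ).PosSemidef}) : ℝ) : EReal)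
  else ⊤

variable {n m : Type} [Fintype n] [DecidableEq n] [Fintype m] [DecidableEq m]

/-! A positive map sends every `λ` with `ρ ≤ λσ` to one with `N ρ ≤ λ N σ`, so the infimum
can only drop. Trace preservation keeps the new infimum away from `0`, where `logb` stops
being monotone: `N ρ ≤ λ N σ` forces `1 = tr (N ρ) ≤ λ tr (N σ)`. -/

def dmaxFeasible {k : Type} [Fintype k] (ρ σ : Matrix k k ℂ) : Set ℝ :=
  {l : ℝ | 0 ≤ l ∧ (l • σ - ρ).PosSemidef}

lemma Dmax_eq_logb_sInf {k : Type} [Fintype k] [DecidableEq k] {ρ σ : Matrix k k ℂ}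
    (h : (dmaxFeasible ρ σ).Nonempty) :
    Dmax ρ σ = ((Real.logb 2 (sInf (dmaxFeasible ρ σ)) : ℝ) : EReal) :=
  dif_pos h

lemma Dmax_eq_top {k : Type} [Fintype k] [DecidableEq k] {ρ σ : Matrix k k ℂ}
    (h : ¬(dmaxFeasible ρ σ).Nonempty) : Dmax ρ σ = ⊤ :=
  dif_neg h

lemma dmaxFeasible_subset_map {k k' : Type} [Fintype k] [Fintype k']
    (N : Matrix k k ℂ →ₗ[ℂ] Matrix k' k' ℂ)
    (hpos : ∀ A : Matrix k k ℂ, A.PosSemidef → (N A).PosSemidef) (ρ σ : Matrix k k ℂ) :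
    dmaxFeasible ρ σ ⊆ dmaxFeasible (N ρ) (N σ) := by
  rintro l ⟨hl, hlσρ⟩
  refine ⟨hl, ?_⟩
  simpa only [map_sub, LinearMap.map_smul_of_tower] using hpos _ hlσρ

lemma trace_re_le_mul_trace_re_of_mem_dmaxFeasible {k : Type} [Fintype k]
    {ρ σ : Matrix k k ℂ} {l : ℝ} (hl : l ∈ dmaxFeasible ρ σ) :
    ρ.trace.re ≤ l * σ.trace.re := by
  have h := (Complex.nonneg_iff.mp hl.2.trace_nonneg).1
  simpa only [trace_sub, trace_smul, Complex.sub_re, Complex.real_smul, Complex.re_ofReal_mul,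
    sub_nonneg] using h

lemma sInf_dmaxFeasible_pos {k : Type} [Fintype k] {ρ σ : Matrix k k ℂ} (hρ : ρ.trace = 1)
    (hne : (dmaxFeasible ρ σ).Nonempty) : 0 < sInf (dmaxFeasible ρ σ) := by
  have hbound (l : ℝ) (hl : l ∈ dmaxFeasible ρ σ) : 1 ≤ l * σ.trace.re := by
    simpa [hρ] using trace_re_le_mul_trace_re_of_mem_dmaxFeasible hl
  have hσ : 0 < σ.trace.re := by
    obtain ⟨l, hl⟩ := hne
    nlinarith [hbound l hl, hl.1]
  calc 0 < 1 / σ.trace.re := by positivity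
    _ ≤ sInf (dmaxFeasible ρ σ) :=
      le_csInf hne fun l hl => (div_le_iff₀ hσ).mpr (hbound l hl)

lemma Dmax_le_of_dmaxFeasible_subset {k k' : Type} [Fintype k] [DecidableEq k] [Fintype k']
    [DecidableEq k'] {ρ σ : Matrix k k ℂ} {ρ' σ' : Matrix k' k' ℂ} (hρ' : ρ'.trace = 1)
    (hsub : dmaxFeasible ρ σ ⊆ dmaxFeasible ρ' σ') : Dmax ρ' σ' ≤ Dmax ρ σ := by
  by_cases hne : (dmaxFeasible ρ σ).Nonempty
  · have hne' := hne.mono hsub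
    have hbdd : BddBelow (dmaxFeasible ρ' σ') := ⟨0, fun _ hl => hl.1⟩
    rw [Dmax_eq_logb_sInf hne, Dmax_eq_logb_sInf hne']
    exact EReal.coe_le_coe_iff.mpr <| Real.logb_le_logb_of_le one_lt_two
      (sInf_dmaxFeasible_pos hρ' hne') (csInf_le_csInf hbdd hne hsub)
  · rw [Dmax_eq_top hne]
    exact le_top

theorem Dmax_monotone_of_positive_tracePreserving_general
    (N : Matrix n n ℂ →ₗ[ℂ] Matrix m m ℂ)
    (hpos : ∀ A : Matrix n n ℂ, A.PosSemidef → (N A).PosSemidef)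
    (htp : ∀ A : Matrix n n ℂ, (N A).trace = A.trace)
    (ρ σ : Matrix n n ℂ) (hρtr : ρ.trace = 1) :
    Dmax (N ρ) (N σ) ≤ Dmax ρ σ :=
  Dmax_le_of_dmaxFeasible_subset (by rw [htp, hρtr]) (dmaxFeasible_subset_map N hpos ρ σ)

/-- The max-relative entropy is monotone under positive trace-preserving linear
maps: `D_max(N(ρ)‖N(σ)) ≤ D_max(ρ‖σ)`. -/
theorem Dmax_monotone_of_positive_tracePreserving
    (N : Matrix n n ℂ →ₗ[ℂ] Matrix m m ℂ)
    (hpos : ∀ A : Matrix n n ℂ, A.PosSemidef → (N A).PosSemidef)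
    (htp : ∀ A : Matrix n n ℂ, (N A).trace = A.trace)
    (ρ σ : Matrix n n ℂ) (hρ : ρ.PosSemidef) (hρtr : ρ.trace = 1)
    (hσ : σ.PosSemidef) :
    Dmax (N ρ) (N σ) ≤ Dmax ρ σ :=
  Dmax_monotone_of_positive_tracePreserving_general N hpos htp ρ σ hρtr
end

section
/- Monotonicity in α of the sandwiched Rényi relative entropy at α → ∞ endpoint: for any density operator ρ and positive semi-definite σ with supp(ρ) ⊆ supp(σ), and any α ∈ (1, ∞), the sandwiched Rényi relative entropy D̃_α(ρ||σ) = (1/(α−1)) log₂ Tr[(σ^{(1−α)/(2α)} ρ σ^{(1−α)/(2α)})^α] satisfies D̃_α(ρ||σ) ≤ D_max(ρ||σ), where D_max(ρ||σ) = log₂ inf{λ : ρ ≤ λσ}. -/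
open Matrix
open scoped ComplexOrder Classical

/-- Real power of a Hermitian matrix via the spectral theorem (junk value `0`
for non-Hermitian input).  For negative exponents this uses the convention
`0^r = 0` on the kernel, i.e. powers are taken on the support. -/
noncomputable def mrpow {n : Type} [Fintype n] [DecidableEq n]
    (A : Matrix n n ℂ) (r : ℝ) : Matrix n n ℂ :=
  if hA : A.IsHermitian then
    (hA.eigenvectorUnitary : Matrix n n ℂ) *
      Matrix.diagonal (fun i => ((hA.eigenvalues i ^ r : ℝ) : ℂ)) *
        (hA.eigenvectorUnitary : Matrix n n ℂ)ᴴ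
  else 0

/-- The sandwiched Rényi relative entropy
`D̃_α(ρ‖σ) = (1/(α−1)) log₂ Tr[(σ^{(1−α)/(2α)} ρ σ^{(1−α)/(2α)})^α]`. -/
noncomputable def sandwichedRenyi {n : Type} [Fintype n] [DecidableEq n]
    (α : ℝ) (ρ σ : Matrix n n ℂ) : ℝ :=
  (α - 1)⁻¹ *
    Real.logb 2
      ((mrpow (mrpow σ ((1 - α) / (2 * α)) * ρ * mrpow σ ((1 - α) / (2 * α))) α).trace.re)

variable {n : Type} [Fintype n] [DecidableEq n]

/-!
Put `Y = σ^{-1/2} ρ σ^{-1/2}` and `t = (1-α)/(2α)`. From `ρ ≤ λσ` one gets `Y ≤ λ`, and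
`σ^t ρ σ^t = X Xᴴ` with `X = σ^{1/(2α)} Y^{1/2}`, whose partner `Xᴴ X = Y^{1/2} σ^{1/α} Y^{1/2}`
has the same spectrum. For a matrix `C` with `Cᴴ C ≤ c`, the weights `|⟨e_j, C u_k⟩|²` (with
`e_j`, `u_k` eigenbases of `A` and of `Cᴴ A C`) sum to at most `c` in `j`, so Jensen's inequality
for `x ↦ x^α` gives `Tr (Cᴴ A C)^α ≤ c^{α-1} Tr (Cᴴ A^α C)`. With `A = σ^{1/α}` and `C = Y^{1/2}`
this bounds `Tr (σ^t ρ σ^t)^α` by `λ^{α-1} Tr (σ Y) = λ^{α-1} Tr ρ = λ^{α-1}`; the support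
condition is what makes `Tr (σ Y) = Tr ρ`.
-/

open scoped MatrixOrder

local notation:max A:max " ^ᶜ " r:max => cfc (fun x : ℝ => x ^ r) A

lemma Real.rpow_sum_mul_le_mul_sum_mul_rpow {ι : Type*} (s : Finset ι) {α c : ℝ} (hα : 1 ≤ α)
    {w y : ι → ℝ} (hw : ∀ i, 0 ≤ w i) (hy : ∀ i, 0 ≤ y i) (hc : ∑ i ∈ s, w i ≤ c) :
    (∑ i ∈ s, w i * y i) ^ α ≤ c ^ (α - 1) * ∑ i ∈ s, w i * y i ^ α := by
  have hα0 : α ≠ 0 := by positivity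
  have hW : 0 ≤ ∑ i ∈ s, w i := Finset.sum_nonneg fun i _ => hw i
  have hWy : 0 ≤ ∑ i ∈ s, w i * y i ^ α :=
    Finset.sum_nonneg fun i _ => mul_nonneg (hw i) (Real.rpow_nonneg (hy i) α)
  calc (∑ i ∈ s, w i * y i) ^ α
      ≤ ((∑ i ∈ s, w i) ^ (1 - α⁻¹) * (∑ i ∈ s, w i * y i ^ α) ^ α⁻¹) ^ α :=
        Real.rpow_le_rpow (Finset.sum_nonneg fun i _ => mul_nonneg (hw i) (hy i))
          (Real.inner_le_weight_mul_Lp_of_nonneg s hα w y hw hy) (by linarith)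
    _ = (∑ i ∈ s, w i) ^ (α - 1) * ∑ i ∈ s, w i * y i ^ α := by
        rw [Real.mul_rpow (by positivity) (by positivity), ← Real.rpow_mul hW,
          Real.rpow_inv_rpow hWy hα0, sub_mul, one_mul, inv_mul_cancel₀ hα0]
    _ ≤ c ^ (α - 1) * ∑ i ∈ s, w i * y i ^ α := by gcongr

lemma Real.inv_mul_logb_le_logb_of_le_rpow {T l α : ℝ} (hα : 1 < α) (hT : 0 < T) (hl : 0 ≤ l)
    (h : T ≤ l ^ (α - 1)) : (α - 1)⁻¹ * Real.logb 2 T ≤ Real.logb 2 l := by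
  have hl' : 0 < l := by
    refine hl.lt_of_ne' fun hl0 => ?_
    rw [hl0, Real.zero_rpow (by linarith)] at h
    linarith
  rw [inv_mul_le_iff₀ (by linarith), ← Real.logb_rpow_eq_mul_logb_of_pos hl']
  exact Real.logb_le_logb_of_le (by norm_num) hT h

lemma isClosed_setOf_posSemidef {m 𝕜 : Type*} [Fintype m] [RCLike 𝕜] :
    IsClosed {M : Matrix m m 𝕜 | M.PosSemidef} := by
  have h : {M : Matrix m m 𝕜 | M.PosSemidef} =
      {M | Mᴴ = M} ∩ ⋂ x : m → 𝕜, {M | 0 ≤ star x ⬝ᵥ (M *ᵥ x)} := by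
    ext M
    simp [Matrix.posSemidef_iff_dotProduct_mulVec, Matrix.IsHermitian]
  rw [h]
  exact (isClosed_eq continuous_id.matrix_conjTranspose continuous_id).inter
    (isClosed_iInter fun x => isClosed_le continuous_const (by fun_prop))

lemma sInf_mem_setOf_smul_sub_posSemidef {m : Type*} [Fintype m] {ρ σ : Matrix m m ℂ}
    (hne : {l : ℝ | 0 ≤ l ∧ ((l : ℝ) • σ - ρ).PosSemidef}.Nonempty) :
    sInf {l : ℝ | 0 ≤ l ∧ ((l : ℝ) • σ - ρ).PosSemidef} ∈
      {l : ℝ | 0 ≤ l ∧ ((l : ℝ) • σ - ρ).PosSemidef} :=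
  (isClosed_Ici.inter (isClosed_setOf_posSemidef.preimage (by fun_prop))).csInf_mem hne
    ⟨0, fun _ hl => hl.1⟩

namespace Matrix

lemma mul_eq_zero_of_ker_le {k l m o R : Type*} [Fintype m] [NonUnitalNonAssocSemiring R]
    {A : Matrix l m R} {B : Matrix k m R} {M : Matrix m o R}
    (hker : ∀ v, A *ᵥ v = 0 → B *ᵥ v = 0) (hM : A * M = 0) : B * M = 0 := by
  ext i j
  have hcol : A *ᵥ (fun k => M k j) = 0 := funext fun i => by
    have h := congrFun (congrFun hM i) j
    rwa [mul_apply'] at h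
  rw [mul_apply', zero_apply]
  exact congrFun (hker _ hcol) i

lemma re_conjTranspose_mul_diagonal_mul_apply_self {l m : Type*} [Fintype m] [DecidableEq m]
    (W : Matrix m l ℂ) (d : m → ℝ) (k : l) :
    ((Wᴴ * diagonal (fun i => (d i : ℂ)) * W) k k).re = ∑ j, ‖W j k‖ ^ 2 * d j := by
  simp only [mul_apply, conjTranspose_apply, diagonal_apply, mul_ite, mul_zero,
    Finset.sum_ite_eq', Finset.mem_univ, if_true, Complex.re_sum]
  refine Finset.sum_congr rfl fun j _ => ?_
  rw [mul_right_comm, RCLike.star_def, Complex.conj_mul', ← Complex.ofReal_pow,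
    ← Complex.ofReal_mul, Complex.ofReal_re]

lemma mrpow_eq_cfc {A : Matrix n n ℂ} (hA : A.IsHermitian) (r : ℝ) : mrpow A r = A ^ᶜ r := by
  rw [mrpow, dif_pos hA, hA.cfc_eq, IsHermitian.cfc, Unitary.conjStarAlgAut_apply]
  rfl

lemma conjTranspose_cfc (A : Matrix n n ℂ) (f : ℝ → ℝ) : (cfc f A)ᴴ = cfc f A :=
  (cfc_predicate f A).star_eq

lemma IsHermitian.cfc_eq_mul_diagonal_mul {A : Matrix n n ℂ} (hA : A.IsHermitian) (f : ℝ → ℝ) :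
    cfc f A = (hA.eigenvectorUnitary : Matrix n n ℂ) *
      diagonal (fun i => (f (hA.eigenvalues i) : ℂ)) *
        star (hA.eigenvectorUnitary : Matrix n n ℂ) := by
  rw [hA.cfc_eq, IsHermitian.cfc, Unitary.conjStarAlgAut_apply]
  rfl

lemma IsHermitian.trace_cfc {A : Matrix n n ℂ} (hA : A.IsHermitian) (f : ℝ → ℝ) :
    (cfc f A).trace = ∑ i, (f (hA.eigenvalues i) : ℂ) := by
  rw [hA.cfc_eq_mul_diagonal_mul, trace_mul_cycle, Unitary.coe_star_mul_self, one_mul,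
    trace_diagonal]

lemma trace_cfc_mul_conjTranspose (X : Matrix n n ℂ) (f : ℝ → ℝ) :
    (cfc f (X * Xᴴ)).trace = (cfc f (Xᴴ * X)).trace := by
  have h₁ := (posSemidef_self_mul_conjTranspose X).isHermitian
  have h₂ := (posSemidef_conjTranspose_mul_self X).isHermitian
  rw [h₁.trace_cfc, h₂.trace_cfc,
    (h₁.eigenvalues_eq_eigenvalues_iff h₂).mpr (charpoly_mul_comm _ _)]

lemma PosSemidef.trace_cfc_rpow_pos {Q : Matrix n n ℂ} (hQ : Q.PosSemidef) (hQ0 : Q ≠ 0)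
    (α : ℝ) : 0 < (Q ^ᶜ α).trace.re := by
  obtain ⟨i, hi⟩ : ∃ i, hQ.isHermitian.eigenvalues i ≠ 0 := by
    by_contra! h
    exact hQ0 (hQ.isHermitian.eigenvalues_eq_zero_iff.mp (funext h))
  rw [hQ.isHermitian.trace_cfc, Complex.re_sum]
  simp only [Complex.ofReal_re]
  exact Finset.sum_pos' (fun j _ => Real.rpow_nonneg (hQ.eigenvalues_nonneg j) α)
    ⟨i, Finset.mem_univ i, Real.rpow_pos_of_pos ((hQ.eigenvalues_nonneg i).lt_of_ne' hi) α⟩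

theorem trace_cfc_rpow_conj_le {A C : Matrix n n ℂ} (hA : A.PosSemidef) {c : ℝ}
    (hC : Cᴴ * C ≤ c • 1) {α : ℝ} (hα : 1 ≤ α) :
    ((Cᴴ * A * C) ^ᶜ α).trace.re ≤ c ^ (α - 1) * (Cᴴ * A ^ᶜ α * C).trace.re := by
  have hB : (Cᴴ * A * C).IsHermitian := (hA.conjTranspose_mul_mul_same C).isHermitian
  set U : Matrix n n ℂ := (hA.isHermitian.eigenvectorUnitary : Matrix n n ℂ)
  set V : Matrix n n ℂ := (hB.eigenvectorUnitary : Matrix n n ℂ)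
  set W := star U * C * V
  set a := hA.isHermitian.eigenvalues
  have hconj (f : ℝ → ℝ) :
      star V * (Cᴴ * cfc f A * C) * V = Wᴴ * diagonal (fun i => (f (a i) : ℂ)) * W := by
    rw [hA.isHermitian.cfc_eq_mul_diagonal_mul]
    simp only [W, U, ← star_eq_conjTranspose, star_mul, star_star, Matrix.mul_assoc]
    rfl
  have heig (k : n) : hB.eigenvalues k = ∑ j, ‖W j k‖ ^ 2 * a j := by
    have hdiag : star V * (Cᴴ * A * C) * V = diagonal (fun i => (hB.eigenvalues i : ℂ)) := by
      have h := hB.conjStarAlgAut_star_eigenvectorUnitary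
      rwa [Unitary.conjStarAlgAut_star_apply] at h
    have h := congrArg (fun M => (M k k).re) (hconj id)
    rw [cfc_id ℝ A hA.isHermitian.isSelfAdjoint, hdiag] at h
    simpa [re_conjTranspose_mul_diagonal_mul_apply_self] using h
  have hweight (k : n) : ∑ j, ‖W j k‖ ^ 2 ≤ c := by
    have hWW := hconj fun _ => 1
    rw [cfc_const_one ℝ A, mul_one] at hWW
    have hle : star V * (Cᴴ * C) * V ≤ c • 1 :=
      calc star V * (Cᴴ * C) * V ≤ star V * (c • 1) * V := star_left_conjugate_le_conjugate hC V
        _ = c • 1 := by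
          rw [mul_smul_comm, mul_one, smul_mul_assoc,
            Unitary.star_mul_self_of_mem hB.eigenvectorUnitary.2]
    have hkk := (Complex.le_def.mp ((le_iff.mp hle).diag_nonneg (i := k))).1
    rw [hWW, sub_apply, Complex.sub_re, re_conjTranspose_mul_diagonal_mul_apply_self] at hkk
    simpa using hkk
  have htrace (M : Matrix n n ℂ) : M.trace = (star V * M * V).trace := by
    rw [trace_mul_cycle, Unitary.mul_star_self_of_mem hB.eigenvectorUnitary.2, one_mul]
  rw [hB.trace_cfc, htrace, hconj, trace, Complex.re_sum, Complex.re_sum, Finset.mul_sum]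
  refine Finset.sum_le_sum fun k _ => ?_
  rw [diag_apply, re_conjTranspose_mul_diagonal_mul_apply_self, Complex.ofReal_re, heig]
  exact Real.rpow_sum_mul_le_mul_sum_mul_rpow _ hα (fun j => by positivity)
    hA.eigenvalues_nonneg (hweight k)

section Support

variable {σ : Matrix n n ℂ}

lemma PosSemidef.cfc_mul_cfc_eq (hσ : σ.PosSemidef) {f g h : ℝ → ℝ}
    (hfg : ∀ x, 0 ≤ x → f x * g x = h x) : cfc f σ * cfc g σ = cfc h σ := by
  rw [← cfc_mul f g σ (σ.finite_real_spectrum.continuousOn f)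
    (σ.finite_real_spectrum.continuousOn g)]
  exact cfc_congr fun x hx => hfg x (spectrum_nonneg_of_nonneg hσ.nonneg hx)

lemma PosSemidef.cfc_rpow_mul_cfc_rpow (hσ : σ.PosSemidef) {a b : ℝ} (hab : a + b ≠ 0) :
    σ ^ᶜ a * σ ^ᶜ b = σ ^ᶜ (a + b) :=
  hσ.cfc_mul_cfc_eq fun _ hx => (Real.rpow_add' hx hab).symm

/-- The projection onto the range of `σ`. Since `0 ^ r = 0` for `r ≠ 0`, the negative powers
`σ ^ᶜ r` invert `σ` only on its range, and `σ ^ᶜ (-r) * σ ^ᶜ r` is this projection. -/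
noncomputable def supportProj (σ : Matrix n n ℂ) : Matrix n n ℂ :=
  cfc (fun x : ℝ => if x = 0 then 0 else 1) σ

lemma supportProj_le_one : supportProj σ ≤ 1 :=
  cfc_le_one _ σ fun _ _ => by split_ifs <;> norm_num

lemma PosSemidef.mul_supportProj (hσ : σ.PosSemidef) : σ * supportProj σ = σ := by
  nth_rewrite 1 [← cfc_id ℝ σ hσ.isHermitian.isSelfAdjoint]
  rw [supportProj, hσ.cfc_mul_cfc_eq (h := id) fun _ _ => by split_ifs <;> simp [*],
    cfc_id ℝ σ hσ.isHermitian.isSelfAdjoint]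

lemma PosSemidef.mul_supportProj_of_ker_le (hσ : σ.PosSemidef) {ρ : Matrix n n ℂ}
    (hker : ∀ v, σ *ᵥ v = 0 → ρ *ᵥ v = 0) : ρ * supportProj σ = ρ := by
  have h : ρ * (1 - supportProj σ) = 0 :=
    mul_eq_zero_of_ker_le hker (by rw [mul_sub, mul_one, hσ.mul_supportProj, sub_self])
  rwa [mul_sub, mul_one, sub_eq_zero, eq_comm] at h

lemma PosSemidef.cfc_rpow_mul_cfc_rpow_neg (hσ : σ.PosSemidef) {a : ℝ} (ha : a ≠ 0) :
    σ ^ᶜ a * σ ^ᶜ (-a) = supportProj σ := by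
  refine hσ.cfc_mul_cfc_eq fun x hx => ?_
  rcases hx.eq_or_lt with rfl | hx
  · simp [Real.zero_rpow ha]
  · rw [Real.rpow_neg hx.le, mul_inv_cancel₀ (Real.rpow_pos_of_pos hx a).ne', if_neg hx.ne']

lemma PosSemidef.cfc_rpow_neg_half_mul_self_mul (hσ : σ.PosSemidef) :
    σ ^ᶜ (-(1 / 2) : ℝ) * σ * σ ^ᶜ (-(1 / 2) : ℝ) = supportProj σ := by
  nth_rewrite 2 [← cfc_id' ℝ σ hσ.isHermitian.isSelfAdjoint]
  rw [hσ.cfc_mul_cfc_eq (h := fun x => x ^ (-(1 / 2) : ℝ) * x) fun x _ => rfl]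
  refine hσ.cfc_mul_cfc_eq fun x hx => ?_
  rcases hx.eq_or_lt with rfl | hx
  · simp
  · rw [mul_right_comm, ← Real.rpow_add hx, if_neg hx.ne']
    norm_num [Real.rpow_neg_one, hx.ne']

lemma PosSemidef.cfc_rpow_neg_half_conj_le (hσ : σ.PosSemidef) {ρ : Matrix n n ℂ} {l : ℝ}
    (hl : 0 ≤ l) (hle : ρ ≤ l • σ) : σ ^ᶜ (-(1 / 2) : ℝ) * ρ * σ ^ᶜ (-(1 / 2) : ℝ) ≤ l • 1 :=
  calc σ ^ᶜ (-(1 / 2) : ℝ) * ρ * σ ^ᶜ (-(1 / 2) : ℝ)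
      ≤ σ ^ᶜ (-(1 / 2) : ℝ) * (l • σ) * σ ^ᶜ (-(1 / 2) : ℝ) :=
        IsSelfAdjoint.conjugate_le_conjugate hle (cfc_predicate _ σ)
    _ = l • supportProj σ := by
        rw [mul_smul_comm, smul_mul_assoc, hσ.cfc_rpow_neg_half_mul_self_mul]
    _ ≤ l • 1 := smul_le_smul_of_nonneg_left supportProj_le_one hl

lemma PosSemidef.trace_cfc_rpow_neg_half_conj_mul (hσ : σ.PosSemidef) {ρ : Matrix n n ℂ}
    (hker : ∀ v, σ *ᵥ v = 0 → ρ *ᵥ v = 0) :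
    (σ ^ᶜ (-(1 / 2) : ℝ) * ρ * σ ^ᶜ (-(1 / 2) : ℝ) * σ).trace = ρ.trace := by
  rw [mul_assoc, trace_mul_comm, ← mul_assoc, hσ.cfc_rpow_neg_half_mul_self_mul, trace_mul_comm,
    hσ.mul_supportProj_of_ker_le hker]

lemma PosSemidef.cfc_rpow_cfc_rpow_inv (hσ : σ.PosSemidef) {a : ℝ} (ha : a ≠ 0) :
    (σ ^ᶜ a⁻¹) ^ᶜ a = σ := by
  have hσsa : IsSelfAdjoint σ := hσ.isHermitian.isSelfAdjoint
  rw [← cfc_comp (· ^ a) (· ^ a⁻¹) σ hσsa ((σ.finite_real_spectrum.image _).continuousOn _)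
    (σ.finite_real_spectrum.continuousOn _)]
  conv_rhs => rw [← cfc_id' ℝ σ hσsa]
  exact cfc_congr fun x hx => Real.rpow_inv_rpow (spectrum_nonneg_of_nonneg hσ.nonneg hx) ha

end Support

lemma PosSemidef.cfc_rpow_mul_mul_cfc_rpow_ne_zero {ρ σ : Matrix n n ℂ} (hρ : ρ.IsHermitian)
    (hσ : σ.PosSemidef) (hker : ∀ v, σ *ᵥ v = 0 → ρ *ᵥ v = 0) (hρ0 : ρ ≠ 0) {a : ℝ}
    (ha : a ≠ 0) : σ ^ᶜ a * ρ * σ ^ᶜ a ≠ 0 := by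
  have hρP := hσ.mul_supportProj_of_ker_le hker
  have hPρ : supportProj σ * ρ = ρ := by
    simpa only [conjTranspose_mul, supportProj, conjTranspose_cfc, hρ.eq]
      using congrArg Matrix.conjTranspose hρP
  have hP := hσ.cfc_rpow_mul_cfc_rpow_neg (neg_ne_zero.mpr ha)
  rw [neg_neg] at hP
  intro h
  have hPρP : σ ^ᶜ (-a) * (σ ^ᶜ a * ρ * σ ^ᶜ a) * σ ^ᶜ (-a) = ρ := by
    rw [← mul_assoc, ← mul_assoc, hP, mul_assoc, hσ.cfc_rpow_mul_cfc_rpow_neg ha, hPρ, hρP]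
  rw [h, mul_zero, zero_mul] at hPρP
  exact hρ0 hPρP.symm

theorem trace_sandwich_rpow_le_of_le_smul {ρ σ : Matrix n n ℂ} (hρ : ρ.PosSemidef)
    (hσ : σ.PosSemidef) (hker : ∀ v, σ *ᵥ v = 0 → ρ *ᵥ v = 0) {α : ℝ} (hα : 1 < α) {l : ℝ}
    (hl : 0 ≤ l) (hle : ρ ≤ l • σ) :
    ((σ ^ᶜ ((1 - α) / (2 * α)) * ρ * σ ^ᶜ ((1 - α) / (2 * α))) ^ᶜ α).trace.re
      ≤ l ^ (α - 1) * ρ.trace.re := by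
  have hα0 : α ≠ 0 := by positivity
  set t := (1 - α) / (2 * α)
  set p : ℝ := -(1 / 2)
  set s : ℝ := (2 * α)⁻¹
  have hsp : s + p = t := by simp only [s, p, t]; field_simp; ring
  have ht : t ≠ 0 := div_ne_zero (by linarith) (by positivity)
  set Y := σ ^ᶜ p * ρ * σ ^ᶜ p
  have hY : 0 ≤ Y := by
    simpa [Y, conjTranspose_cfc] using (hρ.conjTranspose_mul_mul_same (σ ^ᶜ p)).nonneg
  set C := CFC.sqrt Y
  have hC : Cᴴ = C := (CFC.sqrt_nonneg Y).isSelfAdjoint.star_eq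
  have hCC : C * C = Y := CFC.sqrt_mul_sqrt_self Y hY
  set X := σ ^ᶜ s * C
  have hXX : X * Xᴴ = σ ^ᶜ t * ρ * σ ^ᶜ t := by
    have hsp' : σ ^ᶜ s * σ ^ᶜ p = σ ^ᶜ t := by
      rw [hσ.cfc_rpow_mul_cfc_rpow (hsp ▸ ht), hsp]
    have hps : σ ^ᶜ p * σ ^ᶜ s = σ ^ᶜ t := by
      rw [hσ.cfc_rpow_mul_cfc_rpow (by rwa [add_comm, hsp]), add_comm, hsp]
    calc X * Xᴴ = (σ ^ᶜ s * σ ^ᶜ p) * ρ * (σ ^ᶜ p * σ ^ᶜ s) := by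
          simp only [X, conjTranspose_mul, hC, conjTranspose_cfc, mul_assoc]
          rw [← mul_assoc C, hCC]
          simp only [Y, mul_assoc]
      _ = σ ^ᶜ t * ρ * σ ^ᶜ t := by rw [hsp', hps]
  have hXX' : Xᴴ * X = Cᴴ * σ ^ᶜ α⁻¹ * C := by
    have hss : s + s = α⁻¹ := by simp only [s]; field_simp; ring
    rw [← hss, ← hσ.cfc_rpow_mul_cfc_rpow (hss ▸ inv_ne_zero hα0)]
    simp only [X, conjTranspose_mul, hC, conjTranspose_cfc, mul_assoc]
  have hA : (σ ^ᶜ α⁻¹).PosSemidef :=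
    (cfc_nonneg fun x hx => Real.rpow_nonneg (spectrum_nonneg_of_nonneg hσ.nonneg hx) _).posSemidef
  have hCle : Cᴴ * C ≤ l • 1 := by
    rw [hC, hCC]
    exact hσ.cfc_rpow_neg_half_conj_le hl hle
  calc ((σ ^ᶜ t * ρ * σ ^ᶜ t) ^ᶜ α).trace.re = ((Cᴴ * σ ^ᶜ α⁻¹ * C) ^ᶜ α).trace.re := by
        rw [← hXX, trace_cfc_mul_conjTranspose, hXX']
    _ ≤ l ^ (α - 1) * (Cᴴ * (σ ^ᶜ α⁻¹) ^ᶜ α * C).trace.re := trace_cfc_rpow_conj_le hA hCle hα.le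
    _ = l ^ (α - 1) * ρ.trace.re := by
        rw [hσ.cfc_rpow_cfc_rpow_inv hα0, trace_mul_cycle, hC, hCC,
          hσ.trace_cfc_rpow_neg_half_conj_mul hker]

end Matrix

/-- For `α ∈ (1,∞)`, a density operator `ρ` and positive semi-definite `σ` with
`supp(ρ) ⊆ supp(σ)`, the sandwiched Rényi relative entropy is bounded by the
max-relative entropy: `D̃_α(ρ‖σ) ≤ D_max(ρ‖σ)`. -/
theorem sandwichedRenyi_le_Dmax (α : ℝ) (hα : 1 < α)
    (ρ σ : Matrix n n ℂ) (hρ : ρ.PosSemidef) (hρtr : ρ.trace = 1)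
    (hσ : σ.PosSemidef)
    (hsupp : ∀ v : n → ℂ, σ.mulVec v = 0 → ρ.mulVec v = 0) :
    ((sandwichedRenyi α ρ σ : ℝ) : EReal) ≤ Dmax ρ σ := by
  rw [Dmax]
  split_ifs with hne
  · obtain ⟨hl, hle⟩ := sInf_mem_setOf_smul_sub_posSemidef hne
    set t := (1 - α) / (2 * α)
    have hQ : (σ ^ᶜ t * ρ * σ ^ᶜ t).PosSemidef := by
      simpa only [Matrix.conjTranspose_cfc] using hρ.conjTranspose_mul_mul_same (σ ^ᶜ t)
    have hρ0 : ρ ≠ 0 := by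
      rintro rfl
      simp at hρtr
    -- positivity of the trace is needed because `Real.logb 2 0 = 0`
    have hpos := hQ.trace_cfc_rpow_pos (hσ.cfc_rpow_mul_mul_cfc_rpow_ne_zero hρ.isHermitian
      hsupp hρ0 (div_ne_zero (by linarith) (by positivity))) α
    have hbound := Matrix.trace_sandwich_rpow_le_of_le_smul hρ hσ hsupp hα hl hle
    rw [hρtr, Complex.one_re, mul_one] at hbound
    rw [sandwichedRenyi, Matrix.mrpow_eq_cfc hσ.isHermitian, Matrix.mrpow_eq_cfc hQ.isHermitian]
    exact_mod_cast Real.inv_mul_logb_le_logb_of_le_rpow hα hpos hl hbound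
  · exact le_top
end

section
/- Privacy test soundness against separable attack: let γ = U^t (Φ_{K_AK_B} ⊗ θ_{S_AS_B}) U^{t†} be a bipartite private state with twisting unitary U^t = Σ_{i,j} |i⟩⟨i|_{K_A} ⊗ |j⟩⟨j|_{K_B} ⊗ U^{ij}_{S_AS_B}, where Φ_{K_AK_B} is maximally entangled of Schmidt rank K, and let Π^γ = U^t (Φ_{K_AK_B} ⊗ I_{S_AS_B}) U^{t†}. Then for every separable state σ ∈ SEP(S_AK_A : K_BS_B), Tr(Π^γ σ) ≤ 1/K. -/
open Matrix
open scoped Kronecker ComplexOrder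

variable {sa sb κ : Type} [Fintype sa] [DecidableEq sa] [Fintype sb] [DecidableEq sb]
  [Fintype κ] [DecidableEq κ] [Nonempty κ]

/-- Separable states across the cut `(S_A K_A) : (K_B S_B)`: finite convex
combinations of tensor products of density operators. -/
def IsSeparableState (σ : Matrix ((sa × κ) × (κ × sb)) ((sa × κ) × (κ × sb)) ℂ) : Prop :=
  ∃ (k : ℕ) (p : Fin k → ℝ) (ω : Fin k → Matrix (sa × κ) (sa × κ) ℂ)
      (τ : Fin k → Matrix (κ × sb) (κ × sb) ℂ),
    (∀ x, 0 ≤ p x) ∧ (∑ x, p x = 1) ∧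
    (∀ x, (ω x).PosSemidef ∧ (ω x).trace = 1) ∧
    (∀ x, (τ x).PosSemidef ∧ (τ x).trace = 1) ∧
    σ = ∑ x, p x • (ω x ⊗ₖ τ x)

/-- The twisting unitary `U^t = Σ_{i,j} |i⟩⟨i|_{K_A} ⊗ |j⟩⟨j|_{K_B} ⊗ U^{ij}_{S_AS_B}`,
on the space ordered as `(S_A × K_A) × (K_B × S_B)`. -/
def twist (Uu : κ → κ → Matrix (sa × sb) (sa × sb) ℂ) :
    Matrix ((sa × κ) × (κ × sb)) ((sa × κ) × (κ × sb)) ℂ :=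
  Matrix.of fun p q =>
    (if p.1.2 = q.1.2 then (1 : ℂ) else 0) * (if p.2.1 = q.2.1 then (1 : ℂ) else 0) *
      (Uu p.1.2 p.2.1) (p.1.1, p.2.2) (q.1.1, q.2.2)

/-- The operator `Φ_{K_AK_B} ⊗ I_{S_AS_B}`, where `Φ_{K_AK_B}` is the maximally
entangled state of Schmidt rank `K`, on the space ordered as
`(S_A × K_A) × (K_B × S_B)`. -/
noncomputable def keyProj :
    Matrix ((sa × κ) × (κ × sb)) ((sa × κ) × (κ × sb)) ℂ :=
  Matrix.of fun p q =>
    ((Fintype.card κ : ℂ))⁻¹ *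
      ((if p.1.2 = p.2.1 then (1 : ℂ) else 0) * (if q.1.2 = q.2.1 then (1 : ℂ) else 0)) *
        ((if p.1.1 = q.1.1 then (1 : ℂ) else 0) * (if p.2.2 = q.2.2 then (1 : ℂ) else 0))

/-!
With `Φ̃ = Σᵢ |ii⟩` and `F = U^t (|Φ̃⟩ ⊗ I)`, the test operator is `Π^γ = K⁻¹ F F†`. Since `U^t`
is block diagonal in the key basis, `F† (x ⊗ w) = Σᵢ U^{ii†} (xᵢ ⊗ wᵢ)` for a product vector,
where `xᵢ = ⟨i|_{K_A} x` and `wᵢ = ⟨i|_{K_B} w`. The summands have norms `‖xᵢ‖ ‖wᵢ‖`, so the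
triangle and Cauchy–Schwarz inequalities give `⟨x ⊗ w| Π^γ |x ⊗ w⟩ ≤ ‖x‖² ‖w‖² / K`.
Factoring `ω = A† A` and `τ = B† B` writes `ω ⊗ τ` as a sum of such product rank-one terms, and
a separable state is a convex combination of products of states.
-/

section KroneckerVec

variable {m n : Type*}

def kroneckerVec {α : Type*} [Mul α] (x : m → α) (w : n → α) : m × n → α :=
  fun p => x p.1 * w p.2

theorem star_kroneckerVec {α : Type*} [CommMonoid α] [StarMul α] (x : m → α) (w : n → α) :
    star (kroneckerVec x w) = kroneckerVec (star x) (star w) := by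
  ext p
  simp [kroneckerVec]

theorem kronecker_apply_eq_kroneckerVec {l o α : Type*} [Mul α] (A : Matrix l m α)
    (B : Matrix o n α) (i : l) (j : o) : (A ⊗ₖ B) (i, j) = kroneckerVec (A i) (B j) :=
  rfl

theorem norm_toLp_kroneckerVec {𝕜 : Type*} [RCLike 𝕜] [Fintype m] [Fintype n]
    (x : m → 𝕜) (w : n → 𝕜) :
    ‖WithLp.toLp 2 (kroneckerVec x w)‖ = ‖WithLp.toLp 2 x‖ * ‖WithLp.toLp 2 w‖ := by
  rw [← sq_eq_sq₀ (norm_nonneg _) (by positivity), mul_pow]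
  simp only [EuclideanSpace.norm_sq_eq, kroneckerVec, Fintype.sum_prod_type, norm_mul, mul_pow,
    Finset.sum_mul_sum]

end KroneckerVec

section
variable {m n 𝕜 : Type*} [Fintype m] [Fintype n] [RCLike 𝕜]

theorem norm_toLp_sq_eq_sum_fst (x : m × n → 𝕜) :
    ‖WithLp.toLp 2 x‖ ^ 2 = ∑ i, ‖WithLp.toLp 2 (fun j => x (i, j))‖ ^ 2 := by
  simp only [EuclideanSpace.norm_sq_eq, Fintype.sum_prod_type]

theorem norm_toLp_sq_eq_sum_snd (x : m × n → 𝕜) :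
    ‖WithLp.toLp 2 x‖ ^ 2 = ∑ j, ‖WithLp.toLp 2 (fun i => x (i, j))‖ ^ 2 := by
  simp only [EuclideanSpace.norm_sq_eq, Fintype.sum_prod_type_right]

theorem re_star_dotProduct_self (v : n → ℂ) :
    (star v ⬝ᵥ v).re = ‖WithLp.toLp 2 v‖ ^ 2 := by
  rw [norm_sq_eq_re_inner (𝕜 := ℂ), EuclideanSpace.inner_toLp_toLp, dotProduct_comm]
  rfl

theorem norm_toLp_mulVec_of_mem_unitaryGroup [DecidableEq n] {U : Matrix n n 𝕜}
    (hU : U ∈ unitaryGroup n 𝕜) (v : n → 𝕜) :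
    ‖WithLp.toLp 2 (U *ᵥ v)‖ = ‖WithLp.toLp 2 v‖ := by
  rw [← toEuclideanCLM_toLp]
  exact ContinuousLinearMap.norm_map_of_mem_unitary (Unitary.map_mem toEuclideanCLM hU) _

end

theorem norm_toLp_sum_mulVec_kroneckerVec_le {m n ι 𝕜 : Type*} [RCLike 𝕜] [Fintype m]
    [DecidableEq m] [Fintype n] [DecidableEq n] [Fintype ι] {V : ι → Matrix (m × n) (m × n) 𝕜}
    (hV : ∀ i, V i ∈ unitaryGroup (m × n) 𝕜) (x : m × ι → 𝕜) (w : ι × n → 𝕜) :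
    ‖WithLp.toLp 2 (∑ i, V i *ᵥ kroneckerVec (fun a => x (a, i)) (fun b => w (i, b)))‖ ≤
      ‖WithLp.toLp 2 x‖ * ‖WithLp.toLp 2 w‖ :=
  calc _ ≤ ∑ i, ‖WithLp.toLp 2 (V i *ᵥ kroneckerVec (fun a => x (a, i)) (fun b => w (i, b)))‖ := by
        rw [WithLp.toLp_sum]
        exact norm_sum_le _ _
    _ = ∑ i, ‖WithLp.toLp 2 (fun a => x (a, i))‖ * ‖WithLp.toLp 2 (fun b => w (i, b))‖ := by
        simp only [norm_toLp_mulVec_of_mem_unitaryGroup (hV _), norm_toLp_kroneckerVec]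
    _ ≤ √(∑ i, ‖WithLp.toLp 2 (fun a => x (a, i))‖ ^ 2) *
          √(∑ i, ‖WithLp.toLp 2 (fun b => w (i, b))‖ ^ 2) :=
        Real.sum_mul_le_sqrt_mul_sqrt _ _ _
    _ = ‖WithLp.toLp 2 x‖ * ‖WithLp.toLp 2 w‖ := by
        rw [← norm_toLp_sq_eq_sum_snd, ← norm_toLp_sq_eq_sum_fst, Real.sqrt_sq (norm_nonneg _),
          Real.sqrt_sq (norm_nonneg _)]

section
variable {m n r α : Type*} [Fintype m] [Fintype n] [CommSemiring α] [StarRing α]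

theorem star_dotProduct_mul_conjTranspose_mulVec (A : Matrix m n α) (z : m → α) :
    star z ⬝ᵥ (A * Aᴴ) *ᵥ z = star (Aᴴ *ᵥ z) ⬝ᵥ Aᴴ *ᵥ z := by
  rw [← mulVec_mulVec, dotProduct_mulVec, star_mulVec, conjTranspose_conjTranspose]

theorem trace_mul_conjTranspose_mul_self [Fintype r] (P : Matrix n n α) (C : Matrix r n α) :
    trace (P * (Cᴴ * C)) = ∑ k, C k ⬝ᵥ P *ᵥ star (C k) := by
  rw [← Matrix.mul_assoc, trace_mul_cycle, trace]
  refine Finset.sum_congr rfl fun k _ => ?_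
  rw [diag_apply, mul_apply', dotProduct_mulVec]
  rfl

theorem trace_conjTranspose_mul_self_eq_sum [Fintype r] [DecidableEq n] (C : Matrix r n α) :
    trace (Cᴴ * C) = ∑ k, C k ⬝ᵥ star (C k) := by
  simpa using trace_mul_conjTranspose_mul_self 1 C

end

def ProductStateBound {m n : Type*} [Fintype m] [Fintype n]
    (P : Matrix (m × n) (m × n) ℂ) (c : ℝ) : Prop :=
  ∀ x w, (star (kroneckerVec x w) ⬝ᵥ P *ᵥ kroneckerVec x w).re ≤
    c * (star x ⬝ᵥ x).re * (star w ⬝ᵥ w).re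

open scoped MatrixOrder in
theorem ProductStateBound.re_trace_mul_kronecker_le {m n : Type*} [Fintype m] [Fintype n]
    {P : Matrix (m × n) (m × n) ℂ} {c : ℝ} (hP : ProductStateBound P c)
    {ω : Matrix m m ℂ} {τ : Matrix n n ℂ} (hω : ω.PosSemidef) (hτ : τ.PosSemidef) :
    (P * (ω ⊗ₖ τ)).trace.re ≤ c * ω.trace.re * τ.trace.re := by
  classical
  obtain ⟨a, rfl⟩ := CStarAlgebra.nonneg_iff_eq_star_mul_self.mp hω.nonneg
  obtain ⟨b, rfl⟩ := CStarAlgebra.nonneg_iff_eq_star_mul_self.mp hτ.nonneg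
  have hab : (star a * a) ⊗ₖ (star b * b) = (a ⊗ₖ b)ᴴ * (a ⊗ₖ b) := by
    rw [conjTranspose_kronecker, mul_kronecker_mul, star_eq_conjTranspose, star_eq_conjTranspose]
  rw [hab, trace_mul_conjTranspose_mul_self, star_eq_conjTranspose, star_eq_conjTranspose,
    trace_conjTranspose_mul_self_eq_sum, trace_conjTranspose_mul_self_eq_sum, Complex.re_sum,
    Complex.re_sum, Complex.re_sum, mul_assoc, Finset.sum_mul_sum, Fintype.sum_prod_type]
  simp only [Finset.mul_sum, ← mul_assoc]
  gcongr with k _ l _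
  simpa [kronecker_apply_eq_kroneckerVec, star_kroneckerVec] using hP (star (a k)) (star (b l))

theorem IsSeparableState.re_trace_mul_le {α β ι : Type} [Fintype α] [Fintype β] [Fintype ι]
    {P : Matrix ((α × ι) × (ι × β)) ((α × ι) × (ι × β)) ℂ} {c : ℝ} (hP : ProductStateBound P c)
    {σ : Matrix ((α × ι) × (ι × β)) ((α × ι) × (ι × β)) ℂ} (hσ : IsSeparableState σ) :
    (P * σ).trace.re ≤ c := by
  obtain ⟨k, p, ω, τ, hp_nonneg, hp_sum, hω, hτ, rfl⟩ := hσ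
  simp only [Matrix.mul_sum, Matrix.mul_smul, trace_sum, trace_smul, Complex.re_sum,
    Complex.real_smul, Complex.re_ofReal_mul]
  calc ∑ x, p x * (P * (ω x ⊗ₖ τ x)).trace.re ≤ ∑ x, p x * c := by
        gcongr with x
        · exact hp_nonneg x
        simpa [(hω x).2, (hτ x).2] using hP.re_trace_mul_kronecker_le (hω x).1 (hτ x).1
    _ = c := by rw [← Finset.sum_mul, hp_sum, one_mul]

section PrivacyTest

variable {α β ι : Type} [Fintype α] [Fintype β] [Fintype ι] [DecidableEq ι]

theorem conjTranspose_twist_mulVec_apply (U : ι → ι → Matrix (α × β) (α × β) ℂ)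
    (z : (α × ι) × (ι × β) → ℂ) (a : α) (i j : ι) (b : β) :
    ((twist U)ᴴ *ᵥ z) ((a, i), (j, b)) = ((U i j)ᴴ *ᵥ fun s => z ((s.1, i), (j, s.2))) (a, b) := by
  simp [twist, mulVec, dotProduct, Fintype.sum_prod_type, apply_ite (starRingEnd ℂ), ite_mul]

variable [DecidableEq α] [DecidableEq β]

variable (α β ι) in
/-- `|Φ̃⟩_{K_AK_B} ⊗ I_{S_AS_B}` with the unnormalised `Φ̃ = Σᵢ |ii⟩`. -/
def keyEmbedding : Matrix ((α × ι) × (ι × β)) (α × β) ℂ :=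
  of fun p y => (if p.1.2 = p.2.1 then 1 else 0) * ((if p.1.1 = y.1 then 1 else 0) *
    (if p.2.2 = y.2 then 1 else 0))

theorem keyProj_eq_smul_keyEmbedding_mul_conjTranspose :
    keyProj = (Fintype.card ι : ℂ)⁻¹ •
      (keyEmbedding α β ι * (keyEmbedding α β ι)ᴴ) := by
  ext p q
  simp only [keyProj, keyEmbedding, of_apply, Matrix.smul_apply, smul_eq_mul, mul_apply,
    conjTranspose_apply, RCLike.star_def, apply_ite (starRingEnd ℂ), map_one, map_zero, mul_ite,
    mul_one, mul_zero, Fintype.sum_prod_type, Finset.sum_ite_eq, Finset.mem_univ, ↓reduceIte]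
  split_ifs <;> simp_all

theorem conjTranspose_keyEmbedding_mulVec (v : (α × ι) × (ι × β) → ℂ) :
    (keyEmbedding α β ι)ᴴ *ᵥ v = fun y => ∑ i, v ((y.1, i), (i, y.2)) := by
  ext y
  simp [keyEmbedding, mulVec, dotProduct, Fintype.sum_prod_type, apply_ite (starRingEnd ℂ),
    ite_mul]

theorem twist_mul_keyProj_mul_conjTranspose_twist (U : ι → ι → Matrix (α × β) (α × β) ℂ) :
    twist U * keyProj * (twist U)ᴴ = (Fintype.card ι : ℂ)⁻¹ •
      (twist U * keyEmbedding α β ι * (twist U * keyEmbedding α β ι)ᴴ) := by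
  rw [keyProj_eq_smul_keyEmbedding_mul_conjTranspose, Matrix.mul_smul, Matrix.smul_mul,
    conjTranspose_mul, Matrix.mul_assoc, Matrix.mul_assoc, Matrix.mul_assoc]

theorem conjTranspose_twist_mul_keyEmbedding_mulVec (U : ι → ι → Matrix (α × β) (α × β) ℂ)
    (z : (α × ι) × (ι × β) → ℂ) :
    (twist U * keyEmbedding α β ι)ᴴ *ᵥ z = ∑ i, (U i i)ᴴ *ᵥ fun s => z ((s.1, i), (i, s.2)) := by
  ext y
  rw [conjTranspose_mul, ← mulVec_mulVec, conjTranspose_keyEmbedding_mulVec, Finset.sum_apply]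
  exact Finset.sum_congr rfl fun i _ => conjTranspose_twist_mulVec_apply U z y.1 i i y.2

theorem privacyTest_productStateBound {U : ι → ι → Matrix (α × β) (α × β) ℂ}
    (hU : ∀ i, U i i ∈ unitaryGroup (α × β) ℂ) :
    ProductStateBound (twist U * keyProj * (twist U)ᴴ) (Fintype.card ι : ℝ)⁻¹ := by
  intro x w
  rw [twist_mul_keyProj_mul_conjTranspose_twist, smul_mulVec, dotProduct_smul,
    star_dotProduct_mul_conjTranspose_mulVec, conjTranspose_twist_mul_keyEmbedding_mulVec,
    smul_eq_mul, ← Complex.ofReal_natCast, ← Complex.ofReal_inv, Complex.re_ofReal_mul, mul_assoc]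
  simp only [re_star_dotProduct_self, ← mul_pow]
  gcongr
  exact norm_toLp_sum_mulVec_kroneckerVec_le (fun i => Unitary.star_mem (hU i)) x w

end PrivacyTest

/-- Privacy test soundness against separable attack: for the privacy test
operator `Π^γ = U^t (Φ_{K_AK_B} ⊗ I_{S_AS_B}) U^{t†}` of a bipartite private
state with twisting unitary `U^t`, every separable state
`σ ∈ SEP(S_AK_A : K_BS_B)` satisfies `Tr(Π^γ σ) ≤ 1/K`. -/
theorem privacy_test_separable_bound
    (Uu : κ → κ → Matrix (sa × sb) (sa × sb) ℂ)
    (hUu : ∀ i j, Uu i j ∈ Matrix.unitaryGroup (sa × sb) ℂ)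
    (σ : Matrix ((sa × κ) × (κ × sb)) ((sa × κ) × (κ × sb)) ℂ)
    (hσ : IsSeparableState σ) :
    (((twist Uu * keyProj * (twist Uu)ᴴ) * σ).trace).re ≤
      1 / (Fintype.card κ : ℝ) := by
  rw [one_div]
  exact hσ.re_trace_mul_le (privacyTest_productStateBound fun i => hUu i i)
end
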